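/- arXiv:2604.23104 — 7 statements merged into one kernel-verified Lean document; each statement's English description precedes it below -/
import Mathlib

section
/- Let A be a partially observed real n1×n2 matrix with observation set Ω, all observed entries nonzero. If the homogeneous linear system A_{ij} x_{i'} − A_{i'j} x_i = 0 (for all (i,j),(i',j) ∈ Ω with i < i') has a solution x indexed by S1 = {i : (i,j) ∈ Ω} with all entries nonzero, then there exist vectors a ∈ R^{n1} and b ∈ R^{n2}, all of whose entries are nonzero, with a_i = x_i for all i ∈ S1, such that A_{ij} = a_i b_j for all (i,j) ∈ Ω. -/
open Classical

noncomputable section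

/-- The set of row indices appearing in the observation set `Ω`. -/
def S1 {n1 n2 : ℕ} (Ω : Set (Fin n1 × Fin n2)) : Set (Fin n1) :=
  {i | ∃ j, (i, j) ∈ Ω}

/-- The solution space of the linear system
`A_{ij} x_{i'} − A_{i'j} x_i = 0` for all `(i,j), (i',j) ∈ Ω`,
in the variables `x ∈ ℝ^{S1}`. -/
def solSpace {n1 n2 : ℕ} (A : Matrix (Fin n1) (Fin n2) ℝ)
    (Ω : Set (Fin n1 × Fin n2)) : Submodule ℝ (↥(S1 Ω) → ℝ) where
  carrier := {x | ∀ (i i' : ↥(S1 Ω)) (j : Fin n2),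
    (i.1, j) ∈ Ω → (i'.1, j) ∈ Ω → A i.1 j * x i' - A i'.1 j * x i = 0}
  add_mem' := by
    intro x y hx hy i i' j h1 h2
    simp only [Set.mem_setOf_eq, Pi.add_apply] at *
    linear_combination hx i i' j h1 h2 + hy i i' j h1 h2
  zero_mem' := by
    intro i i' j h1 h2
    simp
  smul_mem' := by
    intro c x hx i i' j h1 h2
    simp only [Set.mem_setOf_eq, Pi.smul_apply, smul_eq_mul] at *
    linear_combination c * hx i i' j h1 h2

/-- `(A, Ω)` is rank one extractable if the solution space of the system
`A_{ij} x_{i'} − A_{i'j} x_i = 0` is one-dimensional. -/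
def Extractable {n1 n2 : ℕ} (A : Matrix (Fin n1) (Fin n2) ℝ)
    (Ω : Set (Fin n1 × Fin n2)) : Prop :=
  Module.finrank ℝ (solSpace A Ω) = 1

/-- `(A, Ω)` is rank one completable if `A_{ij} = a_i b_j` on `Ω` for some vectors `a, b`. -/
def Completable {n1 n2 : ℕ} (A : Matrix (Fin n1) (Fin n2) ℝ)
    (Ω : Set (Fin n1 × Fin n2)) : Prop :=
  ∃ (a : Fin n1 → ℝ) (b : Fin n2 → ℝ), ∀ p ∈ Ω, A p.1 p.2 = a p.1 * b p.2

/-- The bipartite graph with vertex parts `V1`, `V2` and edge set `E ⊆ V1 × V2`. -/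
def biGraph {V1 V2 : Type*} (E : Set (V1 × V2)) : SimpleGraph (V1 ⊕ V2) where
  Adj u v := (∃ i j, (i, j) ∈ E ∧ u = Sum.inl i ∧ v = Sum.inr j) ∨
             (∃ i j, (i, j) ∈ E ∧ u = Sum.inr j ∧ v = Sum.inl i)
  symm := by
    constructor
    rintro u v (⟨i, j, h, rfl, rfl⟩ | ⟨i, j, h, rfl, rfl⟩)
    · exact Or.inr ⟨i, j, h, rfl, rfl⟩
    · exact Or.inl ⟨i, j, h, rfl, rfl⟩
  loopless := by
    constructor
    rintro u (⟨i, j, h, rfl, h2⟩ | ⟨i, j, h, rfl, h2⟩) <;> simp at h2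

end

theorem stmt0 {n1 n2 : ℕ} (A : Matrix (Fin n1) (Fin n2) ℝ) (Ω : Set (Fin n1 × Fin n2))
    (hA : ∀ p ∈ Ω, A p.1 p.2 ≠ 0)
    (x : ↥(S1 Ω) → ℝ) (hx : x ∈ solSpace A Ω) (hxnz : ∀ i, x i ≠ 0) :
    ∃ (a : Fin n1 → ℝ) (b : Fin n2 → ℝ),
      (∀ i, a i ≠ 0) ∧ (∀ j, b j ≠ 0) ∧ (∀ i : ↥(S1 Ω), a i.1 = x i) ∧
      ∀ p ∈ Ω, A p.1 p.2 = a p.1 * b p.2 := by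
  classical
  refine ⟨fun i => if h : i ∈ S1 Ω then x ⟨i, h⟩ else 1,
    fun j => if h : ∃ i, (i, j) ∈ Ω then
      A h.choose j / x ⟨h.choose, j, h.choose_spec⟩ else 1, ?_, ?_, ?_, ?_⟩
  · intro i
    by_cases h : i ∈ S1 Ω
    · simp [h, hxnz]
    · simp [h]
  · intro j
    by_cases h : ∃ i, (i, j) ∈ Ω
    · simp only [dif_pos h]
      exact div_ne_zero (hA (h.choose, j) h.choose_spec) (hxnz _)
    · simp [h]
  · intro i
    simp [i.2]
  · rintro ⟨i, j⟩ hij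
    have hi : i ∈ S1 Ω := ⟨j, hij⟩
    have hex : ∃ i', (i', j) ∈ Ω := ⟨i, hij⟩
    simp only [dif_pos hi, dif_pos hex]
    set c := hex.choose with hc
    have hcΩ : (c, j) ∈ Ω := hex.choose_spec
    have key := hx ⟨c, j, hcΩ⟩ ⟨i, hi⟩ j hcΩ hij
    have hxc : x ⟨c, j, hcΩ⟩ ≠ 0 := hxnz _
    field_simp
    rw [eq_div_iff (hxnz _)]
    linarith [key]
end

section
/- Let A be a partially observed real n1×n2 matrix with observation set Ω, all observed entries nonzero. Then (A, Ω) is rank one completable (i.e., there exist vectors a ∈ R^{n1}, b ∈ R^{n2} with A_{ij} = a_i b_j for all (i,j) ∈ Ω) if and only if the linear system A_{ij} x_{i'} − A_{i'j} x_i = 0 (for all (i,j),(i',j) ∈ Ω, i < i') has a solution x ∈ R^{S1} with all entries nonzero. -/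
open Classical

theorem stmt1 {n1 n2 : ℕ} (A : Matrix (Fin n1) (Fin n2) ℝ) (Ω : Set (Fin n1 × Fin n2))
    (hA : ∀ p ∈ Ω, A p.1 p.2 ≠ 0) :
    Completable A Ω ↔ ∃ x ∈ solSpace A Ω, ∀ i, x i ≠ 0 := by
  constructor
  · rintro ⟨a, b, hab⟩
    refine ⟨fun i => a i.1, ?_, ?_⟩
    · intro i i' j h1 h2
      rw [hab _ h1, hab _ h2]
      ring
    · rintro ⟨i, j, hij⟩
      intro h
      exact hA _ hij (by rw [hab _ hij]; simp [h])
  · rintro ⟨x, hx, hne⟩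
    refine ⟨fun i => if h : i ∈ S1 Ω then x ⟨i, h⟩ else 0,
      fun j => if h : ∃ i : ↥(S1 Ω), (i.1, j) ∈ Ω then A (h.choose).1 j / x h.choose else 0,
      ?_⟩
    rintro ⟨i, j⟩ hij
    have hiS : i ∈ S1 Ω := ⟨j, hij⟩
    have hex : ∃ i' : ↥(S1 Ω), (i'.1, j) ∈ Ω := ⟨⟨i, hiS⟩, hij⟩
    simp only [dif_pos hiS, dif_pos hex]
    have h0 := hx ⟨i, hiS⟩ hex.choose j hij hex.choose_spec
    have hxc := hne hex.choose
    field_simp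
    linarith [h0]
end

section
/- Let A be a partially observed real n1×n2 matrix with observation set Ω such that all observed entries are nonzero, every row index in [n1] and every column index in [n2] appears in Ω (Ω is row-full and column-full), and (A,Ω) is rank one completable. If (A,Ω) is rank one extractable, then (A,Ω) has a unique rank one completion: for any two completions A = a b^T = a' (b')^T agreeing with A on Ω, there is a nonzero scalar τ with a' = τ a and b' = τ^{-1} b. -/
open Classical

theorem stmt5 {n1 n2 : ℕ} (A : Matrix (Fin n1) (Fin n2) ℝ) (Ω : Set (Fin n1 × Fin n2))
    (hA : ∀ p ∈ Ω, A p.1 p.2 ≠ 0)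
    (hrow : ∀ i : Fin n1, ∃ j, (i, j) ∈ Ω)
    (hcol : ∀ j : Fin n2, ∃ i, (i, j) ∈ Ω)
    (hcomp : Completable A Ω)
    (hext : Extractable A Ω) :
    ∀ (a : Fin n1 → ℝ) (b : Fin n2 → ℝ) (a' : Fin n1 → ℝ) (b' : Fin n2 → ℝ),
      (∀ p ∈ Ω, A p.1 p.2 = a p.1 * b p.2) →
      (∀ p ∈ Ω, A p.1 p.2 = a' p.1 * b' p.2) →
      ∃ τ : ℝ, τ ≠ 0 ∧ a' = τ • a ∧ b' = τ⁻¹ • b := by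
  intro a b a' b' h h'
  -- nonvanishing of the factors
  have ha : ∀ i, a i ≠ 0 := by
    intro i hi
    obtain ⟨j, hj⟩ := hrow i
    exact hA _ hj (by simp [h _ hj, hi])
  have ha' : ∀ i, a' i ≠ 0 := by
    intro i hi
    obtain ⟨j, hj⟩ := hrow i
    exact hA _ hj (by simp [h' _ hj, hi])
  -- n1 positive
  have hne : Nonempty (Fin n1) := by
    rcases Nat.eq_zero_or_pos n1 with h0 | h0
    · exfalso
      subst h0
      haveI : IsEmpty (↥(S1 Ω)) := ⟨fun i => i.1.elim0⟩
      haveI : Subsingleton (↥(S1 Ω) → ℝ) := inferInstance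
      haveI : Subsingleton (solSpace A Ω) := inferInstance
      have := Module.finrank_zero_of_subsingleton (R := ℝ) (M := solSpace A Ω)
      rw [Extractable] at hext
      omega
    · exact ⟨⟨0, h0⟩⟩
  obtain ⟨i0⟩ := hne
  have hi0 : i0 ∈ S1 Ω := hrow i0
  -- both a and a' restricted to S1 lie in the solution space
  set x : ↥(S1 Ω) → ℝ := fun i => a i.1 with hxdef
  set x' : ↥(S1 Ω) → ℝ := fun i => a' i.1 with hx'def
  have hx : x ∈ solSpace A Ω := by
    intro i i' j h1 h2
    simp only [hxdef]
    rw [h (i.1, j) h1, h (i'.1, j) h2]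
    ring
  have hx' : x' ∈ solSpace A Ω := by
    intro i i' j h1 h2
    simp only [hx'def]
    rw [h' (i.1, j) h1, h' (i'.1, j) h2]
    ring
  rw [Extractable, finrank_eq_one_iff'] at hext
  obtain ⟨v, hv0, hall⟩ := hext
  obtain ⟨c, hc⟩ := hall ⟨x, hx⟩
  obtain ⟨c', hc'⟩ := hall ⟨x', hx'⟩
  have hxne : (⟨x, hx⟩ : solSpace A Ω) ≠ 0 := by
    intro hz
    have := congrFun (congrArg Subtype.val hz) ⟨i0, hi0⟩
    exact ha i0 this
  have hx'ne : (⟨x', hx'⟩ : solSpace A Ω) ≠ 0 := by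
    intro hz
    have := congrFun (congrArg Subtype.val hz) ⟨i0, hi0⟩
    exact ha' i0 this
  have hcne : c ≠ 0 := by
    intro h0; apply hxne; rw [← hc, h0, zero_smul]
  have hc'ne : c' ≠ 0 := by
    intro h0; apply hx'ne; rw [← hc', h0, zero_smul]
  refine ⟨c' / c, div_ne_zero hc'ne hcne, ?_, ?_⟩
  · -- a' = (c'/c) • a
    have hprop : (⟨x', hx'⟩ : solSpace A Ω) = (c' / c) • ⟨x, hx⟩ := by
      rw [← hc, ← hc', smul_smul, div_mul_cancel₀ _ hcne]
    funext i
    have hiS : i ∈ S1 Ω := hrow i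
    have := congrFun (congrArg Subtype.val hprop) ⟨i, hiS⟩
    simpa [hxdef, hx'def] using this
  · -- b' = (c'/c)⁻¹ • b
    have haeq : ∀ i, a' i = (c' / c) * a i := by
      intro i
      have hprop : (⟨x', hx'⟩ : solSpace A Ω) = (c' / c) • ⟨x, hx⟩ := by
        rw [← hc, ← hc', smul_smul, div_mul_cancel₀ _ hcne]
      have := congrFun (congrArg Subtype.val hprop) ⟨i, hrow i⟩
      simpa [hxdef, hx'def] using this
    funext j
    obtain ⟨i, hij⟩ := hcol j
    have h1 : a i * b j = a' i * b' j := by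
      rw [← h (i, j) hij, ← h' (i, j) hij]
    rw [haeq i] at h1
    have hane := ha i
    have h2 : b j * c = c' * b' j := by
      have := mul_left_cancel₀ hane (show a i * (b j * c) = a i * (c' * b' j) by
        field_simp at h1; linear_combination a i * h1)
      exact this
    have : b' j = (c' / c)⁻¹ * b j := by
      field_simp
      linarith [h2]
    simpa using this
end

section
/- Let A be a partially observed real n1×n2 matrix with observation set Ω, all observed entries nonzero, Ω row-full and column-full, and (A,Ω) rank one completable. If the bipartite graph G(V1,V2,Ω) is connected, then (A,Ω) has a unique rank one completion. -/
open Classical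

theorem stmt7 {n1 n2 : ℕ} (A : Matrix (Fin n1) (Fin n2) ℝ) (Ω : Set (Fin n1 × Fin n2))
    (hA : ∀ p ∈ Ω, A p.1 p.2 ≠ 0)
    (hrow : ∀ i : Fin n1, ∃ j, (i, j) ∈ Ω)
    (hcol : ∀ j : Fin n2, ∃ i, (i, j) ∈ Ω)
    (hcomp : Completable A Ω)
    (hconn : (biGraph Ω).Connected) :
    ∀ (a : Fin n1 → ℝ) (b : Fin n2 → ℝ) (a' : Fin n1 → ℝ) (b' : Fin n2 → ℝ),
      (∀ p ∈ Ω, A p.1 p.2 = a p.1 * b p.2) →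
      (∀ p ∈ Ω, A p.1 p.2 = a' p.1 * b' p.2) →
      ∃ τ : ℝ, τ ≠ 0 ∧ a' = τ • a ∧ b' = τ⁻¹ • b := by
  intro a b a' b' hab hab'
  have ha : ∀ i, a i ≠ 0 := fun i => by
    obtain ⟨j, hj⟩ := hrow i
    intro h; exact hA _ hj (by rw [hab _ hj]; simp [h])
  have ha' : ∀ i, a' i ≠ 0 := fun i => by
    obtain ⟨j, hj⟩ := hrow i
    intro h; exact hA _ hj (by rw [hab' _ hj]; simp [h])
  have hb : ∀ j, b j ≠ 0 := fun j => by
    obtain ⟨i, hi⟩ := hcol j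
    intro h; exact hA _ hi (by rw [hab _ hi]; simp [h])
  have hb' : ∀ j, b' j ≠ 0 := fun j => by
    obtain ⟨i, hi⟩ := hcol j
    intro h; exact hA _ hi (by rw [hab' _ hi]; simp [h])
  set f : Fin n1 ⊕ Fin n2 → ℝ := fun u => Sum.elim (fun i => a' i / a i) (fun j => b j / b' j) u with hf
  have hedge : ∀ u v, (biGraph Ω).Adj u v → f u = f v := by
    rintro u v (⟨i, j, h, rfl, rfl⟩ | ⟨i, j, h, rfl, rfl⟩)
    · have h1 := (hab _ h).symm.trans (hab' _ h)
      simp only [hf, Sum.elim_inl, Sum.elim_inr]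
      rw [div_eq_div_iff (ha i) (hb' j)]
      linarith
    · have h1 := (hab _ h).symm.trans (hab' _ h)
      simp only [hf, Sum.elim_inl, Sum.elim_inr]
      rw [div_eq_div_iff (hb' j) (ha i)]
      linarith
  have key : ∀ u v, f u = f v := by
    intro u v
    obtain ⟨w⟩ := hconn.preconnected u v
    induction w with
    | nil => rfl
    | cons h p ih => exact (hedge _ _ h).trans ih
  have hi0 : ∃ i : Fin n1, True := by
    obtain ⟨u⟩ := hconn.nonempty
    cases u with
    | inl i => exact ⟨i, trivial⟩
    | inr j => obtain ⟨i, _⟩ := hcol j; exact ⟨i, trivial⟩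
  obtain ⟨i0, -⟩ := hi0
  refine ⟨a' i0 / a i0, div_ne_zero (ha' i0) (ha i0), ?_, ?_⟩
  · funext i
    have := key (Sum.inl i) (Sum.inl i0)
    simp only [hf, Sum.elim_inl] at this
    simp only [Pi.smul_apply, smul_eq_mul]
    rw [div_eq_div_iff (ha i) (ha i0)] at this
    rw [div_mul_eq_mul_div, eq_div_iff (ha i0)]
    linarith
  · funext j
    have := key (Sum.inr j) (Sum.inl i0)
    simp only [hf, Sum.elim_inl, Sum.elim_inr] at this
    simp only [Pi.smul_apply, smul_eq_mul]
    rw [inv_div, div_mul_eq_mul_div, eq_div_iff (ha' i0)]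
    rw [div_eq_div_iff (hb' j) (ha i0)] at this
    linarith
end

section
/- Let the partially observed complex 3×3×4 tensor A have observed entries A_{111}=A_{221}=A_{331}=A_{132}=A_{212}=A_{322}=A_{123}=A_{233}=A_{313}=A_{124}=A_{214}=1 on the corresponding observation set Ω. Then any rank one completion A = u⊗v⊗w with u ∈ C^3, v ∈ C^3, w ∈ C^4 is, up to rescaling of the factors, equal to (1,1,1)⊗(1,1,1)⊗(1,1,1,1); in particular a rank one completion exists and is unique. -/
theorem stmt12 (A : Fin 3 → Fin 3 → Fin 4 → ℂ)
    (Ω : Set (Fin 3 × Fin 3 × Fin 4))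
    (hΩ : Ω = {((0 : Fin 3), (0 : Fin 3), (0 : Fin 4)), (1, 1, 0), (2, 2, 0),
      (0, 2, 1), (1, 0, 1), (2, 1, 1),
      (0, 1, 2), (1, 2, 2), (2, 0, 2),
      (0, 1, 3), (1, 0, 3)})
    (hA : ∀ p ∈ Ω, A p.1 p.2.1 p.2.2 = 1) :
    (∃ (u v : Fin 3 → ℂ) (w : Fin 4 → ℂ),
      ∀ p ∈ Ω, A p.1 p.2.1 p.2.2 = u p.1 * v p.2.1 * w p.2.2) ∧
    (∀ (u v : Fin 3 → ℂ) (w : Fin 4 → ℂ),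
      (∀ p ∈ Ω, A p.1 p.2.1 p.2.2 = u p.1 * v p.2.1 * w p.2.2) →
      ∃ α β γ : ℂ, α ≠ 0 ∧ β ≠ 0 ∧ γ ≠ 0 ∧ α * β * γ = 1 ∧
        u = (fun _ => α) ∧ v = (fun _ => β) ∧ w = (fun _ => γ)) := by
  constructor
  · exact ⟨fun _ => 1, fun _ => 1, fun _ => 1, fun p hp => by simp [hA p hp]⟩
  · intro u v w h
    have key : ∀ p ∈ Ω, u p.1 * v p.2.1 * w p.2.2 = 1 :=
      fun p hp => (h p hp).symm.trans (hA p hp)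
    have e1 : u 0 * v 0 * w 0 = 1 := key (0, 0, 0) (by rw [hΩ]; simp only [Set.mem_insert_iff, Set.mem_singleton_iff]; decide)
    have e2 : u 1 * v 1 * w 0 = 1 := key (1, 1, 0) (by rw [hΩ]; simp only [Set.mem_insert_iff, Set.mem_singleton_iff]; decide)
    have e3 : u 2 * v 2 * w 0 = 1 := key (2, 2, 0) (by rw [hΩ]; simp only [Set.mem_insert_iff, Set.mem_singleton_iff]; decide)
    have e4 : u 0 * v 2 * w 1 = 1 := key (0, 2, 1) (by rw [hΩ]; simp only [Set.mem_insert_iff, Set.mem_singleton_iff]; decide)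
    have e5 : u 1 * v 0 * w 1 = 1 := key (1, 0, 1) (by rw [hΩ]; simp only [Set.mem_insert_iff, Set.mem_singleton_iff]; decide)
    have e6 : u 2 * v 1 * w 1 = 1 := key (2, 1, 1) (by rw [hΩ]; simp only [Set.mem_insert_iff, Set.mem_singleton_iff]; decide)
    have e7 : u 0 * v 1 * w 2 = 1 := key (0, 1, 2) (by rw [hΩ]; simp only [Set.mem_insert_iff, Set.mem_singleton_iff]; decide)
    have e8 : u 1 * v 2 * w 2 = 1 := key (1, 2, 2) (by rw [hΩ]; simp only [Set.mem_insert_iff, Set.mem_singleton_iff]; decide)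
    have e9 : u 2 * v 0 * w 2 = 1 := key (2, 0, 2) (by rw [hΩ]; simp only [Set.mem_insert_iff, Set.mem_singleton_iff]; decide)
    have e10 : u 0 * v 1 * w 3 = 1 := key (0, 1, 3) (by rw [hΩ]; simp only [Set.mem_insert_iff, Set.mem_singleton_iff]; decide)
    have e11 : u 1 * v 0 * w 3 = 1 := key (1, 0, 3) (by rw [hΩ]; simp only [Set.mem_insert_iff, Set.mem_singleton_iff]; decide)
    have hu0 : u 0 ≠ 0 := by intro hz; rw [hz] at e1; simp at e1
    have hu1 : u 1 ≠ 0 := by intro hz; rw [hz] at e2; simp at e2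
    have hu2 : u 2 ≠ 0 := by intro hz; rw [hz] at e3; simp at e3
    have hv0 : v 0 ≠ 0 := by intro hz; rw [hz] at e5; simp at e5
    have hv1 : v 1 ≠ 0 := by intro hz; rw [hz] at e6; simp at e6
    have hv2 : v 2 ≠ 0 := by intro hz; rw [hz] at e4; simp at e4
    have hw0 : w 0 ≠ 0 := by intro hz; rw [hz] at e1; simp at e1
    have hw1 : w 1 ≠ 0 := by intro hz; rw [hz] at e4; simp at e4
    have hw2 : w 2 ≠ 0 := by intro hz; rw [hz] at e7; simp at e7
    have hw3 : w 3 ≠ 0 := by intro hz; rw [hz] at e10; simp at e10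
    -- u0 v1 = u1 v0
    have hAA : u 0 * v 1 = u 1 * v 0 :=
      mul_right_cancel₀ hw3 (by linear_combination e10 - e11)
    have hB : w 2 = w 1 :=
      mul_left_cancel₀ (mul_ne_zero hu1 hv0)
        (by linear_combination e7 - e5 - w 2 * hAA)
    have hC : u 0 = u 1 :=
      mul_right_cancel₀ (mul_ne_zero hv2 hw1)
        (by linear_combination e4 - e8 + u 1 * v 2 * hB)
    have hD : v 1 = v 0 :=
      mul_left_cancel₀ hu0 (by linear_combination hAA - v 0 * hC)
    have hE : u 2 = u 0 :=
      mul_right_cancel₀ (mul_ne_zero hv0 hw1)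
        (by linear_combination e6 - e5 - u 2 * w 1 * hD - v 0 * w 1 * hC)
    have hF : v 2 = v 0 := by
      have h2 : u 0 * (v 2 * w 1) = u 0 * (v 0 * w 1) := by
        linear_combination e4 - e5 - v 0 * w 1 * hC
      exact mul_right_cancel₀ hw1 (by linear_combination mul_left_cancel₀ hu0 h2)
    have hw10 : w 1 = w 0 :=
      mul_left_cancel₀ (mul_ne_zero hu0 hv0)
        (by linear_combination e5 - e1 + v 0 * w 1 * hC)
    have hw20 : w 2 = w 0 := hB.trans hw10
    have hw30 : w 3 = w 0 :=
      mul_left_cancel₀ (mul_ne_zero hu0 hv0)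
        (by linear_combination e11 - e1 + v 0 * w 3 * hC)
    refine ⟨u 0, v 0, w 0, hu0, hv0, hw0, e1, ?_, ?_, ?_⟩
    · funext i; fin_cases i
      · rfl
      · exact hC.symm
      · exact hE
    · funext i; fin_cases i
      · rfl
      · exact hD
      · exact hF
    · funext i; fin_cases i
      · rfl
      · exact hw10
      · exact hw20
      · exact hw30
end

section
/- Let B ∈ R^{ℓ×n} with ℓ ≥ n and rank(B) = n−1, with positive (n−1)-st singular value σ_{n−1}. Let v be a unit vector with Bv = 0. Let B̃ = B + δB be a perturbation with ‖δB‖ ≤ σ_{n−1}/4 (operator norm), and let ṽ be a unit right singular vector of B̃ for its smallest singular value, chosen so that vᵀṽ ≥ 0. Then ‖ṽ − v‖ ≤ (4√2/σ_{n−1})·‖δB‖. -/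
noncomputable section

/-- The Euclidean norm of a vector in `ℝ^n`. -/
def euclNorm {n : ℕ} (x : Fin n → ℝ) : ℝ := Real.sqrt (∑ i, (x i) ^ 2)

/-- The spectral (operator) norm of a matrix: the supremum of `‖Mx‖` over unit vectors `x`. -/
def opNorm {l n : ℕ} (M : Matrix (Fin l) (Fin n) ℝ) : ℝ :=
  sSup {c | ∃ x : Fin n → ℝ, euclNorm x = 1 ∧ c = euclNorm (M.mulVec x)}

/-- The smallest singular value of a matrix: the infimum of `‖Mx‖` over unit vectors `x`. -/
def sigMin {l n : ℕ} (M : Matrix (Fin l) (Fin n) ℝ) : ℝ :=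
  sInf {c | ∃ x : Fin n → ℝ, euclNorm x = 1 ∧ c = euclNorm (M.mulVec x)}

end

section Aux

private lemma enorm_nonneg' {n : ℕ} (x : Fin n → ℝ) : 0 ≤ euclNorm x := Real.sqrt_nonneg _

private lemma enorm_sq' {n : ℕ} (x : Fin n → ℝ) : euclNorm x ^ 2 = ∑ i, x i ^ 2 :=
  Real.sq_sqrt (Finset.sum_nonneg fun i _ => sq_nonneg _)

private lemma enorm_eq_norm' {n : ℕ} (x : Fin n → ℝ) :
    euclNorm x = ‖(WithLp.equiv 2 (Fin n → ℝ)).symm x‖ := by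
  rw [EuclideanSpace.norm_eq, euclNorm]
  congr 1
  refine Finset.sum_congr rfl fun i _ => ?_
  rw [Real.norm_eq_abs, sq_abs]
  rfl

private lemma enorm_sub_le' {n : ℕ} (x y : Fin n → ℝ) :
    euclNorm (x - y) ≤ euclNorm x + euclNorm y := by
  rw [enorm_eq_norm', enorm_eq_norm', enorm_eq_norm', WithLp.equiv_symm_apply, WithLp.toLp_sub]
  exact norm_sub_le _ _

private lemma enorm_smul' {n : ℕ} (c : ℝ) (x : Fin n → ℝ) :
    euclNorm (c • x) = |c| * euclNorm x := by
  rw [enorm_eq_norm', enorm_eq_norm', WithLp.equiv_symm_apply, WithLp.toLp_smul, norm_smul, Real.norm_eq_abs]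

private lemma mulVec_enorm_le' {l n : ℕ} (M : Matrix (Fin l) (Fin n) ℝ) (x : Fin n → ℝ) :
    euclNorm (M.mulVec x) ≤ Real.sqrt (∑ i, ∑ j, M i j ^ 2) * euclNorm x := by
  have h1 : ∑ i, (M.mulVec x i) ^ 2 ≤ (∑ i, ∑ j, M i j ^ 2) * (∑ j, x j ^ 2) := by
    rw [Finset.sum_mul]
    refine Finset.sum_le_sum fun i _ => ?_
    simpa [Matrix.mulVec, dotProduct] using
      Finset.sum_mul_sq_le_sq_mul_sq Finset.univ (fun j => M i j) x
  calc euclNorm (M.mulVec x) = Real.sqrt (∑ i, (M.mulVec x i) ^ 2) := rfl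
    _ ≤ Real.sqrt ((∑ i, ∑ j, M i j ^ 2) * (∑ j, x j ^ 2)) := Real.sqrt_le_sqrt h1
    _ = Real.sqrt (∑ i, ∑ j, M i j ^ 2) * euclNorm x := by
        rw [Real.sqrt_mul (x := ∑ i, ∑ j, M i j ^ 2) (Finset.sum_nonneg fun i _ => Finset.sum_nonneg fun j _ => sq_nonneg _)]
        rfl

private lemma le_opNorm' {l n : ℕ} (M : Matrix (Fin l) (Fin n) ℝ) (x : Fin n → ℝ)
    (hx : euclNorm x = 1) : euclNorm (M.mulVec x) ≤ opNorm M := by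
  refine le_csSup ⟨Real.sqrt (∑ i, ∑ j, M i j ^ 2), ?_⟩ ⟨x, hx, rfl⟩
  rintro c ⟨y, hy, rfl⟩
  simpa [hy] using mulVec_enorm_le' M y

private lemma sigMin_le' {l n : ℕ} (M : Matrix (Fin l) (Fin n) ℝ) (x : Fin n → ℝ)
    (hx : euclNorm x = 1) : sigMin M ≤ euclNorm (M.mulVec x) := by
  refine csInf_le ⟨0, ?_⟩ ⟨x, hx, rfl⟩
  rintro c ⟨y, hy, rfl⟩
  exact enorm_nonneg' _

end Aux

theorem stmt14 {l n : ℕ} (hln : n ≤ l) (B : Matrix (Fin l) (Fin n) ℝ)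
    (hrank : B.rank = n - 1)
    (v : Fin n → ℝ) (hv : B.mulVec v = 0) (hv1 : euclNorm v = 1)
    (σ : ℝ)
    (hσ : σ = sInf {c | ∃ x : Fin n → ℝ,
      euclNorm x = 1 ∧ (∑ i, x i * v i) = 0 ∧ c = euclNorm (B.mulVec x)})
    (hσpos : 0 < σ)
    (δB : Matrix (Fin l) (Fin n) ℝ) (hδ : opNorm δB ≤ σ / 4)
    (tv : Fin n → ℝ) (htv1 : euclNorm tv = 1)
    (htv : euclNorm ((B + δB).mulVec tv) = sigMin (B + δB))
    (hsign : 0 ≤ ∑ i, v i * tv i) :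
    euclNorm (tv - v) ≤ (4 * Real.sqrt 2 / σ) * opNorm δB := by
  set D := opNorm δB with hD
  set c := ∑ i, v i * tv i with hc
  set u : Fin n → ℝ := tv - c • v with hu
  have hvsq : ∑ i, v i ^ 2 = 1 := by
    have := enorm_sq' v; rw [hv1] at this; simpa using this.symm
  have htvsq : ∑ i, tv i ^ 2 = 1 := by
    have := enorm_sq' tv; rw [htv1] at this; simpa using this.symm
  -- u is orthogonal to v
  have hortho : ∑ i, u i * v i = 0 := by
    have : ∀ i, u i * v i = v i * tv i - c * v i ^ 2 := by
      intro i; simp only [hu, Pi.sub_apply, Pi.smul_apply, smul_eq_mul]; ring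
    rw [Finset.sum_congr rfl fun i _ => this i, Finset.sum_sub_distrib, ← Finset.mul_sum,
      hvsq]
    simp [hc]
  -- norm of u squared
  have husq : ∑ i, u i ^ 2 = 1 - c ^ 2 := by
    have : ∀ i, u i ^ 2 = tv i ^ 2 - (2 * c) * (v i * tv i) + c ^ 2 * v i ^ 2 := by
      intro i; simp only [hu, Pi.sub_apply, Pi.smul_apply, smul_eq_mul]; ring
    rw [Finset.sum_congr rfl fun i _ => this i, Finset.sum_add_distrib,
      Finset.sum_sub_distrib, ← Finset.mul_sum, ← Finset.mul_sum, hvsq, htvsq, ← hc]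
    ring
  have hc1 : c ≤ 1 := by
    nlinarith [Finset.sum_nonneg (fun i (_ : i ∈ Finset.univ) => sq_nonneg (u i)), husq, hsign]
  have hDnn : 0 ≤ D := le_trans (enorm_nonneg' (δB.mulVec v)) (le_opNorm' δB v hv1)
  -- B u = B tv
  have hBu : B.mulVec u = B.mulVec tv := by
    rw [hu, Matrix.mulVec_sub, Matrix.mulVec_smul, hv]
    simp
  -- bound on ‖B tv‖
  have hBtv : euclNorm (B.mulVec tv) ≤ 2 * D := by
    have h1 : B.mulVec tv = (B + δB).mulVec tv - δB.mulVec tv := by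
      rw [Matrix.add_mulVec]; abel
    have h2 : euclNorm ((B + δB).mulVec tv) ≤ D := by
      rw [htv]
      calc sigMin (B + δB) ≤ euclNorm ((B + δB).mulVec v) := sigMin_le' _ v hv1
        _ = euclNorm (δB.mulVec v) := by rw [Matrix.add_mulVec, hv, zero_add]
        _ ≤ D := le_opNorm' δB v hv1
    have h3 : euclNorm (δB.mulVec tv) ≤ D := le_opNorm' δB tv htv1
    calc euclNorm (B.mulVec tv) = euclNorm ((B + δB).mulVec tv - δB.mulVec tv) := by rw [← h1]
      _ ≤ euclNorm ((B + δB).mulVec tv) + euclNorm (δB.mulVec tv) := enorm_sub_le' _ _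
      _ ≤ 2 * D := by linarith
  -- σ * ‖u‖ ≤ 2 D
  set r := euclNorm u with hr
  have hrnn : 0 ≤ r := enorm_nonneg' u
  have hkey : σ * r ≤ 2 * D := by
    rcases eq_or_lt_of_le hrnn with h0 | hpos
    · rw [← h0, mul_zero]; linarith
    · set w : Fin n → ℝ := r⁻¹ • u with hw
      have hw1 : euclNorm w = 1 := by
        rw [hw, enorm_smul', abs_of_pos (inv_pos.mpr hpos), ← hr, inv_mul_cancel₀ (ne_of_gt hpos)]
      have hwortho : ∑ i, w i * v i = 0 := by
        have : ∀ i, w i * v i = r⁻¹ * (u i * v i) := by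
          intro i; simp only [hw, Pi.smul_apply, smul_eq_mul]; ring
        rw [Finset.sum_congr rfl fun i _ => this i, ← Finset.mul_sum, hortho, mul_zero]
      have hmem : euclNorm (B.mulVec w) ∈ {c | ∃ x : Fin n → ℝ,
          euclNorm x = 1 ∧ (∑ i, x i * v i) = 0 ∧ c = euclNorm (B.mulVec x)} := ⟨w, hw1, hwortho, rfl⟩
      have hσle : σ ≤ euclNorm (B.mulVec w) := by
        rw [hσ]
        refine csInf_le ⟨0, ?_⟩ hmem
        rintro x ⟨y, _, _, rfl⟩
        exact enorm_nonneg' _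
      have hBw : euclNorm (B.mulVec w) = r⁻¹ * euclNorm (B.mulVec tv) := by
        rw [hw, Matrix.mulVec_smul, enorm_smul', abs_of_pos (inv_pos.mpr hpos), hBu]
      rw [hBw] at hσle
      have : σ * r ≤ euclNorm (B.mulVec tv) := by
        have hσle := mul_le_mul_of_nonneg_right hσle hpos.le
        calc σ * r ≤ r⁻¹ * euclNorm (B.mulVec tv) * r := hσle
          _ = euclNorm (B.mulVec tv) := by field_simp
      linarith
  -- ‖tv - v‖ ≤ √2 * r
  have hfin : euclNorm (tv - v) ≤ Real.sqrt 2 * r := by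
    have hsum : ∑ i, (tv - v) i ^ 2 = 2 - 2 * c := by
      have : ∀ i, (tv - v) i ^ 2 = tv i ^ 2 - 2 * (v i * tv i) + v i ^ 2 := by
        intro i; simp only [Pi.sub_apply]; ring
      rw [Finset.sum_congr rfl fun i _ => this i, Finset.sum_add_distrib,
        Finset.sum_sub_distrib, ← Finset.mul_sum, hvsq, htvsq, ← hc]
      ring
    have h2 : (2 : ℝ) - 2 * c ≤ 2 * (1 - c ^ 2) := by nlinarith
    calc euclNorm (tv - v) = Real.sqrt (∑ i, (tv - v) i ^ 2) := rfl
      _ ≤ Real.sqrt (2 * (1 - c ^ 2)) := by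
          apply Real.sqrt_le_sqrt; rw [hsum]; exact h2
      _ = Real.sqrt 2 * Real.sqrt (1 - c ^ 2) := Real.sqrt_mul (by norm_num) _
      _ = Real.sqrt 2 * r := by rw [hr, euclNorm, husq]
  -- combine
  have hrle : r ≤ 2 * D / σ := by
    rw [le_div_iff₀ hσpos]; linarith [hkey]
  have hs2 : (0:ℝ) ≤ Real.sqrt 2 := Real.sqrt_nonneg 2
  calc euclNorm (tv - v) ≤ Real.sqrt 2 * r := hfin
    _ ≤ Real.sqrt 2 * (2 * D / σ) := by
        exact mul_le_mul_of_nonneg_left hrle hs2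
    _ ≤ (4 * Real.sqrt 2 / σ) * D := by
        rw [div_mul_eq_mul_div, mul_comm (4 * Real.sqrt 2) D, ← mul_div_assoc]
        rw [div_le_div_iff_of_pos_right hσpos]
        nlinarith
end

section
/- Let A be a partially observed real tensor of order m ≥ 2 with observation set Ω such that Ω is mod-t full for every t ∈ [m] and all observed entries of A are nonzero. If (A,Ω) is rank one determinable and rank one completable, then the rank one completion of (A,Ω) is unique: for any two rank one completions u1⊗···⊗um and v1⊗···⊗vm agreeing with A on Ω, there exist nonzero scalars α_k with u_k = α_k v_k for each k ∈ [m]. -/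
open Classical

noncomputable section

/-- The reduced multi-index obtained from a full multi-index `p` by deleting its `k`-th entry. -/
def redIdx {m : ℕ} {n : Fin (m + 1) → ℕ} (k : Fin (m + 1))
    (p : (i : Fin (m + 1)) → Fin (n i)) : (i : Fin m) → Fin (n (k.succAbove i)) :=
  fun i => p (k.succAbove i)

/-- The set `S1^{(k)}` of reduced multi-indices appearing among the observed entries. -/
def S1k {m : ℕ} {n : Fin (m + 1) → ℕ} (Ω : Set ((i : Fin (m + 1)) → Fin (n i)))
    (k : Fin (m + 1)) : Set ((i : Fin m) → Fin (n (k.succAbove i))) :=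
  {r | ∃ p ∈ Ω, redIdx k p = r}

/-- The solution space of the linear system associated with the `k`-th flattening of the
partially observed tensor `(A, Ω)`:
`A_p · x_{red(q)} − A_q · x_{red(p)} = 0` for all observed `p, q` with the same `k`-th index,
in variables `x ∈ ℝ^{S1^{(k)}}`. -/
def flatSolSpace {m : ℕ} {n : Fin (m + 1) → ℕ}
    (A : ((i : Fin (m + 1)) → Fin (n i)) → ℝ)
    (Ω : Set ((i : Fin (m + 1)) → Fin (n i))) (k : Fin (m + 1)) :
    Submodule ℝ (↥(S1k Ω k) → ℝ) where
  carrier := {x | ∀ (p : (i : Fin (m + 1)) → Fin (n i)) (hp : p ∈ Ω)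
      (q : (i : Fin (m + 1)) → Fin (n i)) (hq : q ∈ Ω), p k = q k →
      A p * x ⟨redIdx k q, ⟨q, hq, rfl⟩⟩ - A q * x ⟨redIdx k p, ⟨p, hp, rfl⟩⟩ = 0}
  add_mem' := by
    intro x y hx hy p hp q hq hpq
    simp only [Set.mem_setOf_eq, Pi.add_apply] at *
    linear_combination hx p hp q hq hpq + hy p hp q hq hpq
  zero_mem' := by
    intro p hp q hq hpq
    simp
  smul_mem' := by
    intro c x hx p hp q hq hpq
    simp only [Set.mem_setOf_eq, Pi.smul_apply, smul_eq_mul] at *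
    linear_combination c * hx p hp q hq hpq

/-- The `k`-th flattening of `(A, Ω)` is rank one extractable if the solution space of its
linear system is one-dimensional. -/
def FlatExtractable {m : ℕ} {n : Fin (m + 1) → ℕ}
    (A : ((i : Fin (m + 1)) → Fin (n i)) → ℝ)
    (Ω : Set ((i : Fin (m + 1)) → Fin (n i))) (k : Fin (m + 1)) : Prop :=
  Module.finrank ℝ (flatSolSpace A Ω k) = 1

/-- Reshape a solution `x ∈ ℝ^{S1^{(k)}}` into an `(m−1)`-st order partially observed tensor,
observed on `S1^{(k)}`. -/
def reshape {m : ℕ} {n : Fin (m + 1) → ℕ}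
    (Ω : Set ((i : Fin (m + 1)) → Fin (n i))) (k : Fin (m + 1))
    (x : ↥(S1k Ω k) → ℝ) : ((i : Fin m) → Fin (n (k.succAbove i))) → ℝ :=
  fun r => if h : r ∈ S1k Ω k then x ⟨r, h⟩ else 0

/-- Rank one determinability of a partially observed tensor of order `m`, defined recursively.
For `m = 2` it requires some flattening (i.e., the system of `A` or of `Aᵀ`) to be rank one
extractable.  For `m ≥ 3` it requires some `k`-th flattening to be rank one extractable and the
reshaping of the (unique up to scaling) nontrivial solution of its linear system, observed on
`S1^{(k)}`, to be rank one determinable. -/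
def Determinable : (m : ℕ) → (n : Fin m → ℕ) →
    (((i : Fin m) → Fin (n i)) → ℝ) → Set ((i : Fin m) → Fin (n i)) → Prop
  | 0, _, _, _ => False
  | 1, _, _, _ => False
  | 2, _, A, Ω => ∃ k : Fin 2, FlatExtractable A Ω k
  | (m + 3), n, A, Ω => ∃ k : Fin (m + 3), FlatExtractable A Ω k ∧
      ∀ x ∈ flatSolSpace A Ω k, x ≠ 0 →
        Determinable (m + 2) (fun i => n (k.succAbove i)) (reshape Ω k x) (S1k Ω k)

/-- In a one-dimensional submodule, any element is a multiple of any nonzero element. -/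
lemma exists_smul_eq_of_finrank_one {V : Type*} [AddCommGroup V] [Module ℝ V]
    {W : Submodule ℝ V} (h1 : Module.finrank ℝ W = 1)
    {x y : V} (hx : x ∈ W) (hy : y ∈ W) (hx0 : x ≠ 0) :
    ∃ c : ℝ, y = c • x := by
  haveI : Module.Finite ℝ W := Module.finite_of_finrank_pos (by rw [h1]; norm_num)
  have hle : Submodule.span ℝ {x} ≤ W := Submodule.span_le.mpr (Set.singleton_subset_iff.mpr hx)
  have heq : Submodule.span ℝ {x} = W :=
    Submodule.eq_of_le_of_finrank_le hle (by rw [h1, finrank_span_singleton hx0])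
  rw [← heq] at hy
  obtain ⟨c, hc⟩ := Submodule.mem_span_singleton.mp hy
  exact ⟨c, hc.symm⟩

/-- All entries of a rank-one completion are nonzero under fullness and nonzero observations. -/
lemma entries_ne_zero {m : ℕ} {n : Fin m → ℕ}
    {A : ((i : Fin m) → Fin (n i)) → ℝ} {Ω : Set ((i : Fin m) → Fin (n i))}
    (hfull : ∀ t : Fin m, ∀ a : Fin (n t), ∃ p ∈ Ω, p t = a)
    (hnz : ∀ p ∈ Ω, A p ≠ 0)
    {u : (i : Fin m) → Fin (n i) → ℝ}
    (hu : ∀ p ∈ Ω, A p = ∏ i, u i (p i)) :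
    ∀ t a, u t a ≠ 0 := by
  intro t a
  obtain ⟨p, hp, hpt⟩ := hfull t a
  have h := hnz p hp
  rw [hu p hp] at h
  have := Finset.prod_ne_zero_iff.mp h t (Finset.mem_univ t)
  rwa [hpt] at this

/-- Membership of the product vector in the flattening solution space. -/
lemma prodRed_mem {m : ℕ} {n : Fin (m + 1) → ℕ}
    (A : ((i : Fin (m + 1)) → Fin (n i)) → ℝ)
    (Ω : Set ((i : Fin (m + 1)) → Fin (n i))) (k : Fin (m + 1))
    (u : (i : Fin (m + 1)) → Fin (n i) → ℝ)
    (hu : ∀ p ∈ Ω, A p = ∏ i, u i (p i)) :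
    (fun r : ↥(S1k Ω k) => ∏ i, u (k.succAbove i) (r.1 i)) ∈ flatSolSpace A Ω k := by
  intro p hp q hq hpq
  have hAp := hu p hp
  have hAq := hu q hq
  rw [Fin.prod_univ_succAbove _ k] at hAp hAq
  simp only [redIdx]
  rw [hAp, hAq, hpq]
  ring

/-- The key consequence of extractability: the two completions have proportional
`k`-th factors and reduced products. -/
lemma key_lemma {m : ℕ} {n : Fin (m + 1) → ℕ}
    (A : ((i : Fin (m + 1)) → Fin (n i)) → ℝ)
    (Ω : Set ((i : Fin (m + 1)) → Fin (n i))) (k : Fin (m + 1))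
    (hfull : ∀ t, ∀ a : Fin (n t), ∃ p ∈ Ω, p t = a)
    (hnz : ∀ p ∈ Ω, A p ≠ 0)
    (hext : FlatExtractable A Ω k)
    (u v : (i : Fin (m + 1)) → Fin (n i) → ℝ)
    (hu : ∀ p ∈ Ω, A p = ∏ i, u i (p i))
    (hv : ∀ p ∈ Ω, A p = ∏ i, v i (p i)) :
    ∃ c : ℝ, c ≠ 0 ∧ (∀ a, u k a = c * v k a) ∧
      ∀ r (hr : r ∈ S1k Ω k),
        ∏ i, v (k.succAbove i) (r i) = c * ∏ i, u (k.succAbove i) (r i) := by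
  have hunz := entries_ne_zero hfull hnz hu
  have hvnz := entries_ne_zero hfull hnz hv
  -- `S1k` is nonempty
  have hne : Nonempty ↥(S1k Ω k) := by
    by_contra h
    haveI : IsEmpty ↥(S1k Ω k) := not_nonempty_iff.mp h
    haveI : Subsingleton (↥(S1k Ω k) → ℝ) :=
      ⟨fun f g => funext fun r => (IsEmpty.false r).elim⟩
    haveI : Subsingleton ↥(flatSolSpace A Ω k) :=
      ⟨fun a b => Subtype.ext (Subsingleton.elim _ _)⟩
    have h0 : Module.finrank ℝ ↥(flatSolSpace A Ω k) = 0 := Module.finrank_zero_of_subsingleton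
    rw [hext] at h0
    exact one_ne_zero h0
  set xu : ↥(S1k Ω k) → ℝ := fun r => ∏ i, u (k.succAbove i) (r.1 i) with hxu
  set xv : ↥(S1k Ω k) → ℝ := fun r => ∏ i, v (k.succAbove i) (r.1 i) with hxv
  have hxu_mem : xu ∈ flatSolSpace A Ω k := prodRed_mem A Ω k u hu
  have hxv_mem : xv ∈ flatSolSpace A Ω k := prodRed_mem A Ω k v hv
  have hxu_val : ∀ r : ↥(S1k Ω k), xu r ≠ 0 := fun r =>
    Finset.prod_ne_zero_iff.mpr fun i _ => hunz _ _
  have hxv_val : ∀ r : ↥(S1k Ω k), xv r ≠ 0 := fun r =>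
    Finset.prod_ne_zero_iff.mpr fun i _ => hvnz _ _
  have hxu0 : xu ≠ 0 := by
    intro h
    obtain ⟨r⟩ := hne
    exact hxu_val r (by rw [h]; rfl)
  obtain ⟨c, hc⟩ := exists_smul_eq_of_finrank_one hext hxu_mem hxv_mem hxu0
  have hc0 : c ≠ 0 := by
    obtain ⟨r⟩ := hne
    intro h
    apply hxv_val r
    rw [hc, h]
    simp
  have hprop : ∀ r (hr : r ∈ S1k Ω k),
      ∏ i, v (k.succAbove i) (r i) = c * ∏ i, u (k.succAbove i) (r i) := by
    intro r hr
    have := congrFun hc ⟨r, hr⟩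
    simpa [hxu, hxv] using this
  refine ⟨c, hc0, ?_, hprop⟩
  intro a
  obtain ⟨p, hp, hpk⟩ := hfull k a
  have hAp := hu p hp
  have hAp' := hv p hp
  rw [Fin.prod_univ_succAbove _ k] at hAp hAp'
  have hrp : redIdx k p ∈ S1k Ω k := ⟨p, hp, rfl⟩
  have h2 := hprop (redIdx k p) hrp
  simp only [redIdx] at h2
  have hX : (∏ i, u (k.succAbove i) (p (k.succAbove i))) ≠ 0 :=
    Finset.prod_ne_zero_iff.mpr fun i _ => hunz _ _
  have : u k (p k) * ∏ i, u (k.succAbove i) (p (k.succAbove i))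
      = v k (p k) * (c * ∏ i, u (k.succAbove i) (p (k.succAbove i))) := by
    rw [← h2, ← hAp, ← hAp']
  have := mul_right_cancel₀ hX (by linarith [this] : u k (p k) * (∏ i, u (k.succAbove i) (p (k.succAbove i))) = (c * v k (p k)) * (∏ i, u (k.succAbove i) (p (k.succAbove i))))
  rwa [hpk] at this

lemma aux_main (m : ℕ) : ∀ (n : Fin (m + 2) → ℕ)
    (A : ((i : Fin (m + 2)) → Fin (n i)) → ℝ) (Ω : Set ((i : Fin (m + 2)) → Fin (n i))),
    (∀ t, ∀ a : Fin (n t), ∃ p ∈ Ω, p t = a) →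
    (∀ p ∈ Ω, A p ≠ 0) →
    Determinable (m + 2) n A Ω →
    ∀ u v : (i : Fin (m + 2)) → Fin (n i) → ℝ,
      (∀ p ∈ Ω, A p = ∏ i, u i (p i)) →
      (∀ p ∈ Ω, A p = ∏ i, v i (p i)) →
      ∃ α : Fin (m + 2) → ℝ, (∀ k, α k ≠ 0) ∧ ∀ k, u k = α k • v k := by
  induction m with
  | zero =>
    intro n A Ω hfull hnz hdet u v hu hv
    obtain ⟨k, hext⟩ : ∃ k : Fin 2, FlatExtractable A Ω k := hdet
    obtain ⟨c, hc0, hk, hrest⟩ := key_lemma A Ω k hfull hnz hext u v hu hv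
    -- the other mode
    have hother : ∀ a : Fin (n (k.succAbove 0)), u (k.succAbove 0) a = c⁻¹ * v (k.succAbove 0) a := by
      intro a
      obtain ⟨p, hp, hpk⟩ := hfull (k.succAbove 0) a
      have hr : redIdx k p ∈ S1k Ω k := ⟨p, hp, rfl⟩
      have h2 := hrest (redIdx k p) hr
      simp only [Fin.prod_univ_one, redIdx] at h2
      rw [hpk] at h2
      field_simp
      linarith [h2]
    refine ⟨k.insertNth c (fun _ => c⁻¹), ?_, ?_⟩
    · intro t
      rcases eq_or_ne t k with rfl | ht
      · rw [Fin.insertNth_apply_same]; exact hc0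
      · obtain ⟨i, rfl⟩ := Fin.exists_succAbove_eq (Ne.symm ht).symm
        rw [Fin.insertNth_apply_succAbove]
        exact inv_ne_zero hc0
    · intro t
      rcases eq_or_ne t k with rfl | ht
      · rw [Fin.insertNth_apply_same]
        funext a
        simpa using hk a
      · obtain ⟨i, rfl⟩ := Fin.exists_succAbove_eq (Ne.symm ht).symm
        rw [Fin.insertNth_apply_succAbove]
        funext a
        have hi : i = 0 := Subsingleton.elim i 0
        subst hi
        simpa using hother a
  | succ m ih =>
    intro n A Ω hfull hnz hdet u v hu hv
    obtain ⟨k, hext, hrec⟩ : ∃ k : Fin (m + 3), FlatExtractable A Ω k ∧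
        ∀ x ∈ flatSolSpace A Ω k, x ≠ 0 →
          Determinable (m + 2) (fun i => n (k.succAbove i)) (reshape Ω k x) (S1k Ω k) := hdet
    obtain ⟨c, hc0, hk, hrest⟩ := key_lemma A Ω k hfull hnz hext u v hu hv
    have hunz := entries_ne_zero hfull hnz hu
    set xu : ↥(S1k Ω k) → ℝ := fun r => ∏ i, u (k.succAbove i) (r.1 i) with hxu
    have hxu_mem : xu ∈ flatSolSpace A Ω k := prodRed_mem A Ω k u hu
    have hxu_val : ∀ r : ↥(S1k Ω k), xu r ≠ 0 := fun r =>
      Finset.prod_ne_zero_iff.mpr fun i _ => hunz _ _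
    have hxu0 : xu ≠ 0 := by
      by_contra h
      rcases isEmpty_or_nonempty ↥(S1k Ω k) with he | hne2
      · -- contradiction with extractability as in key_lemma
        haveI : Subsingleton (↥(S1k Ω k) → ℝ) :=
          ⟨fun f g => funext fun r => (IsEmpty.false r).elim⟩
        haveI : Subsingleton ↥(flatSolSpace A Ω k) :=
          ⟨fun a b => Subtype.ext (Subsingleton.elim _ _)⟩
        have h0 : Module.finrank ℝ ↥(flatSolSpace A Ω k) = 0 :=
          Module.finrank_zero_of_subsingleton
        rw [hext] at h0
        exact one_ne_zero h0
      · obtain ⟨r⟩ := hne2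
        exact hxu_val r (by rw [h]; rfl)
    -- the reduced problem
    set n' : Fin (m + 2) → ℕ := fun i => n (k.succAbove i) with hn'
    set A' : ((i : Fin (m + 2)) → Fin (n' i)) → ℝ := reshape Ω k xu with hA'
    have hA'val : ∀ r (hr : r ∈ S1k Ω k), A' r = ∏ i, u (k.succAbove i) (r i) := by
      intro r hr
      simp only [hA', reshape, dif_pos hr]
      rfl
    have hfull' : ∀ t, ∀ a : Fin (n' t), ∃ r ∈ S1k Ω k, r t = a := by
      intro t a
      obtain ⟨p, hp, hpt⟩ := hfull (k.succAbove t) a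
      exact ⟨redIdx k p, ⟨p, hp, rfl⟩, hpt⟩
    have hnz' : ∀ r ∈ S1k Ω k, A' r ≠ 0 := by
      intro r hr
      rw [hA'val r hr]
      exact Finset.prod_ne_zero_iff.mpr fun i _ => hunz _ _
    have hdet' : Determinable (m + 2) n' A' (S1k Ω k) := hrec xu hxu_mem hxu0
    set u' : (i : Fin (m + 2)) → Fin (n' i) → ℝ := fun i => u (k.succAbove i) with hu'
    set v' : (i : Fin (m + 2)) → Fin (n' i) → ℝ :=
      fun i => (if i = 0 then c⁻¹ else 1) • v (k.succAbove i) with hv'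
    have hucomp : ∀ r ∈ S1k Ω k, A' r = ∏ i, u' i (r i) := fun r hr => hA'val r hr
    have hvcomp : ∀ r ∈ S1k Ω k, A' r = ∏ i, v' i (r i) := by
      intro r hr
      have h1 : ∏ i, v' i (r i)
          = ∏ i, ((if i = 0 then c⁻¹ else 1) * v (k.succAbove i) (r i)) :=
        Finset.prod_congr rfl fun x _ => by by_cases h : x = 0 <;> simp [hv', h]
      rw [h1, Finset.prod_mul_distrib,
        Finset.prod_ite_eq' Finset.univ (0 : Fin (m + 2)) (fun _ => c⁻¹)]
      simp only [Finset.mem_univ, if_true]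
      rw [hrest r hr, hA'val r hr, ← mul_assoc, inv_mul_cancel₀ hc0, one_mul]
    obtain ⟨β, hβ0, hβ⟩ := ih n' A' (S1k Ω k) hfull' hnz' hdet' u' v' hucomp hvcomp
    refine ⟨k.insertNth c (fun i => β i * (if i = 0 then c⁻¹ else 1)), ?_, ?_⟩
    · intro t
      rcases eq_or_ne t k with rfl | ht
      · rw [Fin.insertNth_apply_same]; exact hc0
      · obtain ⟨i, rfl⟩ := Fin.exists_succAbove_eq (Ne.symm ht).symm
        rw [Fin.insertNth_apply_succAbove]
        exact mul_ne_zero (hβ0 i) (by split <;> simp [hc0])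
    · intro t
      rcases eq_or_ne t k with rfl | ht
      · rw [Fin.insertNth_apply_same]
        funext a
        simpa using hk a
      · obtain ⟨i, rfl⟩ := Fin.exists_succAbove_eq (Ne.symm ht).symm
        rw [Fin.insertNth_apply_succAbove]
        have h2 : u (k.succAbove i) = β i • ((if i = 0 then c⁻¹ else 1) • v (k.succAbove i)) :=
          hβ i
        rw [h2, smul_smul]

theorem stmt18 {m : ℕ} (hm : 2 ≤ m) (n : Fin m → ℕ)
    (A : ((i : Fin m) → Fin (n i)) → ℝ) (Ω : Set ((i : Fin m) → Fin (n i)))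
    (hfull : ∀ t : Fin m, ∀ a : Fin (n t), ∃ p ∈ Ω, p t = a)
    (hnz : ∀ p ∈ Ω, A p ≠ 0)
    (hdet : Determinable m n A Ω)
    (u v : (i : Fin m) → Fin (n i) → ℝ)
    (hu : ∀ p ∈ Ω, A p = ∏ i, u i (p i))
    (hv : ∀ p ∈ Ω, A p = ∏ i, v i (p i)) :
    ∃ α : Fin m → ℝ, (∀ k, α k ≠ 0) ∧ ∀ k, u k = α k • v k := by
  rcases m with _ | _ | m
  · exact absurd hm (by norm_num)
  · exact absurd hm (by norm_num)
  · exact aux_main m n A Ω hfull hnz hdet u v hu hv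

end
end
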